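/- arXiv:2309.02069 — 4 statements merged into one kernel-verified Lean document; each statement's English description precedes it below -/
import Mathlib

section
/- Let c(m) = Γ((m-1)/2)·√(m/2) / Γ(m/2) for m > 1. Then c(m) > 1 for all m > 2. -/
theorem cohen_c_gt_one (m : ℝ) (hm : 2 < m) :
    1 < Real.Gamma ((m - 1) / 2) * Real.sqrt (m / 2) / Real.Gamma (m / 2) := by
  set x := (m - 1) / 2 with hxdef
  have hx0 : 0 < x := by rw [hxdef]; linarith
  have hG : 0 < Real.Gamma x := Real.Gamma_pos_of_pos hx0
  have hG2 : 0 < Real.Gamma (m/2) := Real.Gamma_pos_of_pos (by linarith)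
  have hkey : Real.Gamma (x + 1/2) ≤ Real.Gamma x * Real.sqrt x := by
    have hc := Real.convexOn_log_Gamma
    have h := hc.2 (Set.mem_Ioi.mpr hx0) (Set.mem_Ioi.mpr (by linarith : (0:ℝ) < x + 1))
      (by norm_num : (0:ℝ) ≤ 1/2) (by norm_num : (0:ℝ) ≤ 1/2) (by norm_num)
    simp only [Function.comp, smul_eq_mul] at h
    have hmid : (1/2 : ℝ) * x + (1/2 : ℝ) * (x+1) = x + 1/2 := by ring
    rw [hmid, Real.Gamma_add_one (ne_of_gt hx0), Real.log_mul (ne_of_gt hx0) (ne_of_gt hG)] at h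
    have hrhs : (1/2:ℝ) * Real.log (Real.Gamma x) +
        (1/2:ℝ) * (Real.log x + Real.log (Real.Gamma x)) =
        Real.log (Real.Gamma x * Real.sqrt x) := by
      rw [Real.log_mul (ne_of_gt hG) (ne_of_gt (Real.sqrt_pos.mpr hx0)),
        Real.log_sqrt hx0.le]
      ring
    rw [hrhs] at h
    exact (Real.log_le_log_iff (Real.Gamma_pos_of_pos (by linarith))
      (by positivity)).mp h
  have hm2 : m / 2 = x + 1/2 := by rw [hxdef]; ring
  have hlt : Real.Gamma (m/2) < Real.Gamma x * Real.sqrt (m/2) := by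
    rw [hm2]
    calc Real.Gamma (x + 1/2) ≤ Real.Gamma x * Real.sqrt x := hkey
      _ < Real.Gamma x * Real.sqrt (x + 1/2) := by
          apply mul_lt_mul_of_pos_left _ hG
          exact Real.sqrt_lt_sqrt hx0.le (by linarith)
  rw [one_lt_div hG2]
  exact hlt
end

section
/- Let c(m) = Γ((m-1)/2)·√(m/2) / Γ(m/2). Then m/(m-2) - c(m)² > 0 for all m > 2. -/
open Real in
/-- Log-convexity of Γ at the midpoint: Γ((q+r)/2)² ≤ Γ q · Γ r for q, r > 0. -/
lemma gamma_midpoint_sq_le {q r : ℝ} (hq : 0 < q) (hr : 0 < r) :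
    Gamma ((q + r) / 2) ^ 2 ≤ Gamma q * Gamma r := by
  have h := convexOn_log_Gamma.2 (Set.mem_Ioi.mpr hq) (Set.mem_Ioi.mpr hr)
    (by norm_num : (0:ℝ) ≤ 1/2) (by norm_num : (0:ℝ) ≤ 1/2) (by norm_num)
  simp only [Function.comp_apply, smul_eq_mul] at h
  have hmid : (1/2 : ℝ) * q + (1/2 : ℝ) * r = (q + r) / 2 := by ring
  rw [hmid] at h
  have hpq := Real.Gamma_pos_of_pos hq
  have hpr := Real.Gamma_pos_of_pos hr
  have hpm := Real.Gamma_pos_of_pos (by linarith : (0:ℝ) < (q + r) / 2)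
  have h2 : 2 * Real.log (Gamma ((q + r) / 2)) ≤ Real.log (Gamma q) + Real.log (Gamma r) := by
    linarith
  have := Real.exp_le_exp.mpr h2
  rwa [Real.exp_add, Real.exp_log hpq, Real.exp_log hpr, mul_comm (2:ℝ),
    Real.exp_mul, Real.exp_log hpm, Real.rpow_two] at this

theorem cohen_variance_coeff_pos (m : ℝ) (hm : 2 < m) :
    0 < m / (m - 2)
        - (Real.Gamma ((m - 1) / 2) * Real.sqrt (m / 2) / Real.Gamma (m / 2)) ^ 2 := by
  have hm0 : (0:ℝ) < m := by linarith
  have hm2 : (0:ℝ) < m - 2 := by linarith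
  have hA : (0:ℝ) < (m - 1) / 2 := by linarith
  have hB : (0:ℝ) < m / 2 := by linarith
  have hGA := Real.Gamma_pos_of_pos hA
  have hGB := Real.Gamma_pos_of_pos hB
  -- key inequality: Γ((m+1)/2)² ≤ Γ(m/2) Γ(m/2+1)
  have key := gamma_midpoint_sq_le hB (by linarith : (0:ℝ) < m / 2 + 1)
  have hmid : (m / 2 + (m / 2 + 1)) / 2 = (m - 1) / 2 + 1 := by ring
  rw [hmid, Real.Gamma_add_one hA.ne', Real.Gamma_add_one hB.ne'] at key
  -- so ((m-1)/2)² Γ((m-1)/2)² ≤ (m/2) Γ(m/2)²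
  have key2 : ((m - 1) / 2) ^ 2 * Real.Gamma ((m - 1) / 2) ^ 2
      ≤ (m / 2) * Real.Gamma (m / 2) ^ 2 := by nlinarith [key]
  have hsq : Real.sqrt (m / 2) ^ 2 = m / 2 := Real.sq_sqrt hB.le
  rw [sub_pos, div_pow, mul_pow, hsq, div_lt_div_iff₀ (by positivity) hm2]
  nlinarith [key2, sq_nonneg (Real.Gamma ((m-1)/2)), mul_pos hGA hGA, sq_nonneg (m-1)]
end

section
/- Let x > 0. Then Γ(x + 1/2)/Γ(x) < √x, and consequently c(m) = Γ((m-1)/2)·√(m/2)/Γ(m/2) > √(m/(m-1)) for m > 1. -/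
lemma gamma_half_le : ∀ x : ℝ, 0 < x →
    Real.Gamma (x + 1 / 2) ≤ Real.Gamma x * Real.sqrt x := by
  intro x hx
  have hΓx : 0 < Real.Gamma x := Real.Gamma_pos_of_pos hx
  have hΓh : 0 < Real.Gamma (x + 1 / 2) := Real.Gamma_pos_of_pos (by linarith)
  have hsx : 0 < Real.sqrt x := Real.sqrt_pos.2 hx
  have hc := Real.convexOn_log_Gamma.2 (Set.mem_Ioi.2 hx)
    (Set.mem_Ioi.2 (by linarith : (0:ℝ) < x + 1))
    (by norm_num : (0:ℝ) ≤ 1/2) (by norm_num : (0:ℝ) ≤ 1/2) (by norm_num)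
  simp only [smul_eq_mul, Function.comp_apply] at hc
  have he : (1/2 : ℝ) * x + 1/2 * (x + 1) = x + 1/2 := by ring
  rw [he, Real.Gamma_add_one (ne_of_gt hx), Real.log_mul (ne_of_gt hx) (ne_of_gt hΓx)] at hc
  have hlog : Real.log (Real.Gamma (x + 1 / 2)) ≤ Real.log (Real.Gamma x * Real.sqrt x) := by
    rw [Real.log_mul (ne_of_gt hΓx) (ne_of_gt hsx), Real.log_sqrt hx.le]
    linarith
  exact (Real.log_le_log_iff hΓh (by positivity)).1 hlog

lemma gamma_half_lt : ∀ x : ℝ, 0 < x →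
    Real.Gamma (x + 1 / 2) / Real.Gamma x < Real.sqrt x := by
  intro x hx
  have hΓx : 0 < Real.Gamma x := Real.Gamma_pos_of_pos hx
  have hΓh : 0 < Real.Gamma (x + 1 / 2) := Real.Gamma_pos_of_pos (by linarith)
  have h := gamma_half_le (x + 1) (by linarith)
  have he : x + 1 + 1/2 = (x + 1/2) + 1 := by ring
  rw [he, Real.Gamma_add_one (by positivity : x + 1/2 ≠ 0),
    Real.Gamma_add_one (ne_of_gt hx)] at h
  -- h : (x + 1/2) * Γ(x+1/2) ≤ x * Γ x * √(x+1)
  set s := Real.sqrt x with hs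
  set t := Real.sqrt (x + 1) with ht
  have hs2 : s ^ 2 = x := Real.sq_sqrt hx.le
  have ht2 : t ^ 2 = x + 1 := Real.sq_sqrt (by linarith)
  have hs0 : 0 < s := Real.sqrt_pos.2 hx
  have ht0 : 0 < t := Real.sqrt_pos.2 (by linarith)
  have hst : s < t := by nlinarith
  have key : x * t < (x + 1/2) * s := by nlinarith [mul_pos (sub_pos.2 hst) (sub_pos.2 hst), mul_pos hs0 (mul_pos (sub_pos.2 hst) (sub_pos.2 hst))]
  rw [div_lt_iff₀ hΓx]
  have h2 : (x + 1/2) * Real.Gamma (x + 1/2) < (x + 1/2) * (Real.Gamma x * s) := by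
    calc (x + 1/2) * Real.Gamma (x + 1/2) ≤ x * Real.Gamma x * t := h
    _ < (x + 1/2) * s * Real.Gamma x := by nlinarith
    _ = (x + 1/2) * (Real.Gamma x * s) := by ring
  have := lt_of_mul_lt_mul_left h2 (by linarith : (0:ℝ) ≤ x + 1/2)
  linarith [this]

theorem gamma_ratio_lt_sqrt :
    (∀ x : ℝ, 0 < x → Real.Gamma (x + 1 / 2) / Real.Gamma x < Real.sqrt x) ∧
      ∀ m : ℝ, 1 < m →
        Real.sqrt (m / (m - 1)) <
          Real.Gamma ((m - 1) / 2) * Real.sqrt (m / 2) / Real.Gamma (m / 2) := by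
  refine ⟨gamma_half_lt, fun m hm => ?_⟩
  have hx : 0 < (m - 1) / 2 := by linarith
  have h := gamma_half_lt ((m - 1) / 2) hx
  have he : (m - 1) / 2 + 1 / 2 = m / 2 := by ring
  rw [he] at h
  have hΓx : 0 < Real.Gamma ((m - 1) / 2) := Real.Gamma_pos_of_pos hx
  have hΓm : 0 < Real.Gamma (m / 2) := Real.Gamma_pos_of_pos (by linarith)
  have h2 : Real.Gamma (m / 2) < Real.Gamma ((m - 1) / 2) * Real.sqrt ((m - 1) / 2) := by
    rw [div_lt_iff₀ hΓx, mul_comm] at h; exact h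
  have hs : 0 < Real.sqrt ((m - 1) / 2) := Real.sqrt_pos.2 hx
  have hsm : 0 < Real.sqrt (m / 2) := Real.sqrt_pos.2 (by linarith)
  have key : Real.sqrt (m / (m - 1)) = Real.sqrt (m / 2) / Real.sqrt ((m - 1) / 2) := by
    rw [← Real.sqrt_div (by positivity : (0:ℝ) ≤ m / 2)]
    congr 1
    field_simp
  rw [key, div_lt_div_iff₀ hs hΓm]
  nlinarith [mul_pos hsm hs, mul_lt_mul_of_pos_left h2 hsm]
end

section
/- Let x > 1/2. Then Γ(x + 1/2)/Γ(x) > √(x - 1/4), and hence c(m) = Γ((m-1)/2)·√(m/2)/Γ(m/2) < √(2m/(2m-3)) for m > 3/2. -/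
/-!
Put `g x = (Γ(x + 1/2) / Γ x)² / (x - 1/4)`. The functional equation gives
`g (x + 1) / g x = (x + 1/2)² (x - 1/4) / (x² (x + 3/4)) < 1`, so `g` strictly decreases along
`x + ℕ`. Log-convexity of `Γ` gives `Γ(x + 1)² ≤ Γ(x + 1/2) Γ(x + 3/2)`, i.e.
`g x ≥ x² / ((x + 1/2)(x - 1/4))`, which tends to `1`. Hence `g x > g (x + 1) ≥ 1`.
-/

open Filter Topology

namespace Real

theorem Gamma_add_half_sq_le {x : ℝ} (hx : 0 < x) : Gamma (x + 1 / 2) ^ 2 ≤ x * Gamma x ^ 2 := by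
  have hconv := Gamma_mul_add_mul_le_rpow_Gamma_mul_rpow_Gamma hx (by linarith : 0 < x + 1)
    (by norm_num : (0 : ℝ) < 1 / 2) (by norm_num : (0 : ℝ) < 1 / 2) (by norm_num)
  rw [← sqrt_eq_rpow, ← sqrt_eq_rpow, ← sqrt_mul (Gamma_pos_of_pos hx).le,
    Gamma_add_one hx.ne'] at hconv
  rw [← le_sqrt (Gamma_pos_of_pos (by linarith)).le (by positivity)]
  convert hconv using 2 <;> ring

theorem sq_mul_Gamma_sq_le {x : ℝ} (hx : 0 < x) :
    (x * Gamma x) ^ 2 ≤ (x + 1 / 2) * Gamma (x + 1 / 2) ^ 2 := by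
  have h := Gamma_add_half_sq_le (by linarith : 0 < x + 1 / 2)
  rwa [add_assoc, add_halves, Gamma_add_one hx.ne'] at h

noncomputable def kershawQuotient (x : ℝ) : ℝ := (Gamma (x + 1 / 2) / Gamma x) ^ 2 / (x - 1 / 4)

theorem kershawQuotient_add_one_lt {x : ℝ} (hx : 1 / 4 < x) :
    kershawQuotient (x + 1) < kershawQuotient x := by
  have hx0 : 0 < x := by linarith
  set r := Gamma (x + 1 / 2) / Gamma x with hr_def
  have hr : 0 < r := div_pos (Gamma_pos_of_pos (by linarith)) (Gamma_pos_of_pos hx0)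
  have hstep : kershawQuotient (x + 1) = r ^ 2 * ((x + 1 / 2) ^ 2 / (x ^ 2 * (x + 3 / 4))) := by
    rw [kershawQuotient, add_right_comm, Gamma_add_one (by linarith), Gamma_add_one hx0.ne', hr_def,
      show x + 1 - 1 / 4 = x + 3 / 4 by ring]
    field_simp
  rw [hstep, kershawQuotient, div_eq_mul_one_div (r ^ 2)]
  refine mul_lt_mul_of_pos_left ?_ (by positivity)
  rw [div_lt_div_iff₀ (by positivity) (by linarith)]
  -- `(x + 1/2)² (x - 1/4) = x² (x + 3/4) - 1/16`
  nlinarith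

theorem kershawQuotient_add_nat_le {x : ℝ} (hx : 1 / 4 < x) (n : ℕ) :
    kershawQuotient (x + n) ≤ kershawQuotient x := by
  induction n with
  | zero => simp
  | succ n ih =>
    rw [Nat.cast_succ, ← add_assoc]
    exact (kershawQuotient_add_one_lt (by linarith [n.cast_nonneg (α := ℝ)])).le.trans ih

theorem sq_div_mul_le_kershawQuotient {x : ℝ} (hx : 1 / 4 < x) :
    x ^ 2 / ((x + 1 / 2) * (x - 1 / 4)) ≤ kershawQuotient x := by
  have hx0 : 0 < x := by linarith
  have hlow := sq_mul_Gamma_sq_le hx0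
  rw [kershawQuotient, ← div_div]
  gcongr ?_ / _
  rw [div_le_iff₀ (by linarith), div_pow, div_mul_eq_mul_div, le_div_iff₀ (by positivity)]
  linarith

theorem tendsto_sq_div_mul_atTop :
    Tendsto (fun x : ℝ => x ^ 2 / ((x + 1 / 2) * (x - 1 / 4))) atTop (𝓝 1) := by
  have hinv : Tendsto (fun x : ℝ => x⁻¹) atTop (𝓝 0) := tendsto_inv_atTop_zero
  have h := ((tendsto_const_nhds.add (hinv.const_mul (1 / 2))).mul
    (tendsto_const_nhds.sub (hinv.const_mul (1 / 4)))).inv₀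
    (by norm_num : ((1 : ℝ) + 1 / 2 * 0) * (1 - 1 / 4 * 0) ≠ 0)
  norm_num at h
  refine h.congr' ?_
  filter_upwards [eventually_gt_atTop (1 / 4)] with x hx
  have : x - 1 / 4 ≠ 0 := by linarith
  field_simp

theorem one_le_kershawQuotient {x : ℝ} (hx : 1 / 4 < x) : 1 ≤ kershawQuotient x := by
  have hshift : Tendsto (fun n : ℕ => x + n) atTop atTop :=
    tendsto_atTop_add_const_left _ x tendsto_natCast_atTop_atTop
  refine le_of_tendsto' (tendsto_sq_div_mul_atTop.comp hshift) fun n => ?_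
  have hxn : 1 / 4 < x + n := by linarith [n.cast_nonneg (α := ℝ)]
  exact (sq_div_mul_le_kershawQuotient hxn).trans (kershawQuotient_add_nat_le hx n)

theorem sqrt_sub_quarter_lt_Gamma_add_half_div_Gamma {x : ℝ} (hx : 1 / 4 < x) :
    √(x - 1 / 4) < Gamma (x + 1 / 2) / Gamma x := by
  have hr : 0 < Gamma (x + 1 / 2) / Gamma x :=
    div_pos (Gamma_pos_of_pos (by linarith)) (Gamma_pos_of_pos (by linarith))
  have h : 1 < kershawQuotient x :=
    (one_le_kershawQuotient (by linarith)).trans_lt (kershawQuotient_add_one_lt hx)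
  rw [sqrt_lt' hr]
  rwa [kershawQuotient, one_lt_div (by linarith)] at h

theorem Gamma_mul_sqrt_add_half_div_Gamma_lt {x : ℝ} (hx : 1 / 4 < x) :
    Gamma x * √(x + 1 / 2) / Gamma (x + 1 / 2) < √((x + 1 / 2) / (x - 1 / 4)) := by
  have hs : 0 < √(x - 1 / 4) := sqrt_pos.mpr (by linarith)
  have hlt := sqrt_sub_quarter_lt_Gamma_add_half_div_Gamma hx
  calc Gamma x * √(x + 1 / 2) / Gamma (x + 1 / 2)
      = √(x + 1 / 2) / (Gamma (x + 1 / 2) / Gamma x) := by field_simp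
    _ < √(x + 1 / 2) / √(x - 1 / 4) := div_lt_div_of_pos_left (sqrt_pos.mpr (by linarith)) hs hlt
    _ = √((x + 1 / 2) / (x - 1 / 4)) := (sqrt_div (by linarith) _).symm

end Real

theorem gamma_ratio_gt_sqrt :
    (∀ x : ℝ, 1 / 2 < x → Real.sqrt (x - 1 / 4) < Real.Gamma (x + 1 / 2) / Real.Gamma x) ∧
      ∀ m : ℝ, 3 / 2 < m →
        Real.Gamma ((m - 1) / 2) * Real.sqrt (m / 2) / Real.Gamma (m / 2) <
          Real.sqrt (2 * m / (2 * m - 3)) := by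
  refine ⟨fun x hx => Real.sqrt_sub_quarter_lt_Gamma_add_half_div_Gamma (by linarith), fun m hm => ?_⟩
  have h := Real.Gamma_mul_sqrt_add_half_div_Gamma_lt (x := (m - 1) / 2) (by linarith)
  have hhalf : (m - 1) / 2 + 1 / 2 = m / 2 := by ring
  have hquot : m / 2 / ((m - 1) / 2 - 1 / 4) = 2 * m / (2 * m - 3) := by
    rw [div_eq_div_iff (by linarith) (by linarith)]
    ring
  rwa [hhalf, hquot] at h
end
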